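/- The double triangular snake DT_n is a difference graph. The labeling f(u_i) = 3^{i−1}·2^{n−(i−1)} for 1 ≤ i ≤ n+1, f(v_i) = 5·3^{i−1}·2^{n−i} for 1 ≤ i ≤ n, f(w_i) = 3^{i−1}·2^{n−i} for 1 ≤ i ≤ n is a valid difference labeling: all labels are distinct, every edge of DT_n has label difference belonging to the label set, and every non-edge has label difference outside the label set. -/
import Mathlib


/-- Directed edge relation of the double triangular snake `DTₙ`:
zero-based indexing, `Sum.inl a = u_{a+1}` (path, `a = 0,…,n`),
`Sum.inr (Sum.inl b) = v_{b+1}` (upper), `Sum.inr (Sum.inr c) = w_{c+1}` (lower).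
Triangle edges: `u_{b+1}v_{b+1}`, `u_{b+2}v_{b+1}`, and likewise for `w`. -/
def dtsRel (n : ℕ) :
    (Fin (n + 1) ⊕ (Fin n ⊕ Fin n)) → (Fin (n + 1) ⊕ (Fin n ⊕ Fin n)) → Prop
  | Sum.inl a, Sum.inl a' => (a' : ℕ) = (a : ℕ) + 1
  | Sum.inl a, Sum.inr (Sum.inl b) => (a : ℕ) = (b : ℕ) ∨ (a : ℕ) = (b : ℕ) + 1
  | Sum.inl a, Sum.inr (Sum.inr c) => (a : ℕ) = (c : ℕ) ∨ (a : ℕ) = (c : ℕ) + 1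
  | _, _ => False

/-- Adjacency in the double triangular snake. -/
def dtsAdj (n : ℕ) (x y : Fin (n + 1) ⊕ (Fin n ⊕ Fin n)) : Prop :=
  dtsRel n x y ∨ dtsRel n y x

/-- Labeling of `DTₙ` (one-based: `u_i ↦ 3^(i−1)·2^(n−(i−1))`,
`v_i ↦ 5·3^(i−1)·2^(n−i)`, `w_i ↦ 3^(i−1)·2^(n−i)`). -/
def dtsLabel (n : ℕ) : (Fin (n + 1) ⊕ (Fin n ⊕ Fin n)) → ℕ
  | Sum.inl a => 3 ^ (a : ℕ) * 2 ^ (n - (a : ℕ))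
  | Sum.inr (Sum.inl b) => 5 * 3 ^ (b : ℕ) * 2 ^ (n - 1 - (b : ℕ))
  | Sum.inr (Sum.inr c) => 3 ^ (c : ℕ) * 2 ^ (n - 1 - (c : ℕ))

/-! ### Auxiliary lemmas -/

lemma dts_unique23 {i j r i' j' r' : ℕ} (h2 : r % 2 = 1) (h3 : r % 3 ≠ 0)
    (h2' : r' % 2 = 1) (h3' : r' % 3 ≠ 0)
    (h : 3^i * 2^j * r = 3^i' * 2^j' * r') : i = i' ∧ j = j' ∧ r = r' := by
  have hr : r ≠ 0 := by omega
  have hr' : r' ≠ 0 := by omega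
  have hd2 : ¬ (2 ∣ r) := by omega
  have hd3 : ¬ (3 ∣ r) := fun hh => h3 (Nat.mod_eq_zero_of_dvd hh)
  have hd2' : ¬ (2 ∣ r') := by omega
  have hd3' : ¬ (3 ∣ r') := fun hh => h3' (Nat.mod_eq_zero_of_dvd hh)
  have c2 := congrArg (fun m => m.factorization 2) h
  have c3 := congrArg (fun m => m.factorization 3) h
  simp [Nat.factorization_mul, Nat.factorization_pow, hr, hr',
    Nat.factorization_eq_zero_of_not_dvd hd2, Nat.factorization_eq_zero_of_not_dvd hd3,
    Nat.factorization_eq_zero_of_not_dvd hd2', Nat.factorization_eq_zero_of_not_dvd hd3',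
    Nat.Prime.factorization, Nat.prime_two, Nat.prime_three] at c2 c3
  subst c2; subst c3
  exact ⟨rfl, rfl, Nat.eq_of_mul_eq_mul_left (by positivity) h⟩

lemma dts_mem_iff (n : ℕ) (hn : 1 ≤ n) (i j r : ℕ) (h2 : r % 2 = 1) (h3 : r % 3 ≠ 0) :
    (3^i * 2^j * r ∈ Set.range (dtsLabel n)) ↔
      ((r = 1 ∧ (i + j = n ∨ i + j + 1 = n)) ∨ (r = 5 ∧ i + j + 1 = n)) := by
  constructor
  · rintro ⟨x, hx⟩
    match x with
    | Sum.inl a =>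
      have ha : (a:ℕ) ≤ n := by omega
      have h' : 3^(a:ℕ) * 2^(n - (a:ℕ)) * 1 = 3^i * 2^j * r := by
        simpa [dtsLabel] using hx
      obtain ⟨e1, e2, e3⟩ := dts_unique23 (by norm_num) (by norm_num) h2 h3 h'
      left; exact ⟨e3.symm, Or.inl (by omega)⟩
    | Sum.inr (Sum.inl b) =>
      have hb : (b:ℕ) < n := b.2
      have h' : 3^(b:ℕ) * 2^(n - 1 - (b:ℕ)) * 5 = 3^i * 2^j * r := by
        rw [← hx]; simp [dtsLabel]; ring
      obtain ⟨e1, e2, e3⟩ := dts_unique23 (by norm_num) (by norm_num) h2 h3 h'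
      right; exact ⟨e3.symm, by omega⟩
    | Sum.inr (Sum.inr c) =>
      have hc : (c:ℕ) < n := c.2
      have h' : 3^(c:ℕ) * 2^(n - 1 - (c:ℕ)) * 1 = 3^i * 2^j * r := by
        simpa [dtsLabel] using hx
      obtain ⟨e1, e2, e3⟩ := dts_unique23 (by norm_num) (by norm_num) h2 h3 h'
      left; exact ⟨e3.symm, Or.inr (by omega)⟩
  · rintro (⟨rfl, hs | hs⟩ | ⟨rfl, hs⟩)
    · exact ⟨Sum.inl ⟨i, by omega⟩, by simp [dtsLabel]; omega⟩
    · exact ⟨Sum.inr (Sum.inr ⟨i, by omega⟩), by simp [dtsLabel]; omega⟩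
    · exact ⟨Sum.inr (Sum.inl ⟨i, by omega⟩), by
        simp [dtsLabel]; rw [show n - 1 - i = j by omega]; ring⟩

lemma dts_master (a b m : ℕ) (k0 : ℕ) (h0 : a * 2^k0 + m ≤ b * 3^k0) :
    ∀ d, k0 ≤ d → a * 2^d + m ≤ b * 3^d := by
  intro d hd
  induction d, hd using Nat.le_induction with
  | base => exact h0
  | succ k hk ih =>
    have e1 : (2:ℕ)^(k+1) = 2*2^k := by ring
    have e2 : (3:ℕ)^(k+1) = 3*3^k := by ring
    rw [e1, e2]; nlinarith [ih, Nat.zero_le (b * 3^k)]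

lemma dts_m32 (d : ℕ) : 3^d % 2 = 1 := by rw [Nat.pow_mod]; norm_num
lemma dts_m22 (d : ℕ) (h : 1 ≤ d) : 2^d % 2 = 0 := by
  obtain ⟨e, rfl⟩ : ∃ e, d = e + 1 := ⟨d - 1, by omega⟩
  simp [pow_succ, Nat.mul_mod]
lemma dts_m33 (d : ℕ) (h : 1 ≤ d) : 3^d % 3 = 0 := by
  obtain ⟨e, rfl⟩ : ∃ e, d = e + 1 := ⟨d - 1, by omega⟩
  simp [pow_succ, Nat.mul_mod]
lemma dts_m23 (d : ℕ) : 2^d % 3 ≠ 0 := by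
  intro h
  have h3 : (3:ℕ) ∣ 2^d := Nat.dvd_of_mod_eq_zero h
  have := Nat.Prime.dvd_of_dvd_pow Nat.prime_three h3
  omega

/-- The generic decision step for one pair of vertices. -/
lemma dts_decide (n : ℕ) (hn : 1 ≤ n) {X Y i j r : ℕ} {P : Prop}
    (hM : X + 3^i*2^j*r = Y ∨ Y + 3^i*2^j*r = X)
    (h2 : r % 2 = 1) (h3 : r % 3 ≠ 0)
    (hP : P ↔ ((r = 1 ∧ (i + j = n ∨ i + j + 1 = n)) ∨ (r = 5 ∧ i + j + 1 = n))) :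
    P ↔ ((X:ℤ) - (Y:ℤ)).natAbs ∈ Set.range (dtsLabel n) := by
  have hA : ((X:ℤ) - (Y:ℤ)).natAbs = 3^i*2^j*r := by omega
  rw [hA, dts_mem_iff n hn i j r h2 h3]; exact hP

/-! ### The six case lemmas -/

lemma dts_uu (n : ℕ) (hn : 1 ≤ n) (a a' : Fin (n+1)) (h : (a:ℕ) < (a':ℕ)) :
    dtsAdj n (Sum.inl a) (Sum.inl a') ↔
      ((dtsLabel n (Sum.inl a) : ℤ) - dtsLabel n (Sum.inl a')).natAbs
        ∈ Set.range (dtsLabel n) := by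
  have hA' : (a':ℕ) ≤ n := by omega
  obtain ⟨d, hd1, hd2⟩ : ∃ d, 1 ≤ d ∧ (a':ℕ) = (a:ℕ) + d := ⟨(a':ℕ) - (a:ℕ), by omega, by omega⟩
  obtain ⟨j, hj⟩ : ∃ j, (a:ℕ) + d + j = n := ⟨n - ((a:ℕ) + d), by omega⟩
  simp only [dtsAdj, dtsRel, dtsLabel]
  rw [hd2, show n - (a:ℕ) = j + d from by omega, show n - ((a:ℕ) + d) = j from by omega]
  obtain rfl | rfl | h3 : d = 1 ∨ d = 2 ∨ 3 ≤ d := by omega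
  · exact dts_decide n hn (i := (a:ℕ)) (j := j) (r := 1)
      (Or.inl (by ring)) (by norm_num) (by norm_num) (by omega)
  · exact dts_decide n hn (i := (a:ℕ)) (j := j) (r := 5)
      (Or.inl (by ring)) (by norm_num) (by norm_num) (by omega)
  · have hb := dts_master 1 1 19 3 (by norm_num) d h3
    have f1 := dts_m32 d
    have f2 := dts_m22 d (by omega)
    have f3 := dts_m33 d (by omega)
    have f4 := dts_m23 d
    exact dts_decide n hn (i := (a:ℕ)) (j := j) (r := 3^d - 2^d)
      (Or.inl (by zify [show 2^d ≤ 3^d from by omega]; ring))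
      (by omega) (by omega) (by omega)

lemma dts_uv (n : ℕ) (hn : 1 ≤ n) (a : Fin (n+1)) (b : Fin n) :
    dtsAdj n (Sum.inl a) (Sum.inr (Sum.inl b)) ↔
      ((dtsLabel n (Sum.inl a) : ℤ) - dtsLabel n (Sum.inr (Sum.inl b))).natAbs
        ∈ Set.range (dtsLabel n) := by
  have hb : (b:ℕ) < n := b.2
  have ha : (a:ℕ) ≤ n := by omega
  simp only [dtsAdj, dtsRel, dtsLabel, or_false]
  obtain h | h | h | h : (a:ℕ) = b ∨ (a:ℕ) = (b:ℕ) + 1 ∨ (a:ℕ) < b ∨ (b:ℕ) + 2 ≤ a := by omega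
  · obtain ⟨j, hj⟩ : ∃ j, (b:ℕ) + j + 1 = n := ⟨n - 1 - (b:ℕ), by omega⟩
    rw [h, show n - (b:ℕ) = j + 1 from by omega, show n - 1 - (b:ℕ) = j from by omega]
    exact dts_decide n hn (i := (b:ℕ)+1) (j := j) (r := 1)
      (Or.inl (by ring)) (by norm_num) (by norm_num) (by omega)
  · obtain ⟨j, hj⟩ : ∃ j, (b:ℕ) + j + 1 = n := ⟨n - 1 - (b:ℕ), by omega⟩
    rw [h, show n - ((b:ℕ) + 1) = j from by omega, show n - 1 - (b:ℕ) = j from by omega]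
    exact dts_decide n hn (i := (b:ℕ)) (j := j+1) (r := 1)
      (Or.inl (by ring)) (by norm_num) (by norm_num) (by omega)
  · obtain ⟨d, hd1, hd2⟩ : ∃ d, 1 ≤ d ∧ (b:ℕ) = (a:ℕ) + d := ⟨(b:ℕ) - (a:ℕ), by omega, by omega⟩
    obtain ⟨j, hj⟩ : ∃ j, (a:ℕ) + d + j + 1 = n := ⟨n - 1 - (b:ℕ), by omega⟩
    rw [hd2, show n - (a:ℕ) = j + (d+1) from by omega,
      show n - 1 - ((a:ℕ) + d) = j from by omega]
    have hbd := dts_master 2 5 11 1 (by norm_num) d hd1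
    have f1 := dts_m32 d
    have f3 := dts_m33 d hd1
    have f4 := dts_m23 d
    exact dts_decide n hn (i := (a:ℕ)) (j := j) (r := 5*3^d - 2*2^d)
      (Or.inl (by zify [show 2*2^d ≤ 5*3^d from by omega]; ring))
      (by omega) (by omega) (by omega)
  · obtain ⟨e, he⟩ : ∃ e, (a:ℕ) = (b:ℕ) + e + 2 := ⟨(a:ℕ) - (b:ℕ) - 2, by omega⟩
    obtain ⟨j, hj⟩ : ∃ j, (b:ℕ) + e + 2 + j = n := ⟨n - (a:ℕ), by omega⟩
    rw [he, show n - ((b:ℕ) + e + 2) = j from by omega,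
      show n - 1 - (b:ℕ) = j + (e+1) from by omega]
    obtain rfl | he1 : e = 0 ∨ 1 ≤ e := by omega
    · exact dts_decide n hn (i := (b:ℕ)) (j := j) (r := 1)
        (Or.inl (by ring)) (by norm_num) (by norm_num) (by omega)
    · have hbd := dts_master 10 9 7 1 (by norm_num) e he1
      have f1 := dts_m32 e
      have f4 := dts_m23 e
      exact dts_decide n hn (i := (b:ℕ)) (j := j) (r := 9*3^e - 10*2^e)
        (Or.inr (by zify [show 10*2^e ≤ 9*3^e from by omega]; ring))
        (by omega) (by omega) (by omega)

lemma dts_uw (n : ℕ) (hn : 1 ≤ n) (a : Fin (n+1)) (c : Fin n) :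
    dtsAdj n (Sum.inl a) (Sum.inr (Sum.inr c)) ↔
      ((dtsLabel n (Sum.inl a) : ℤ) - dtsLabel n (Sum.inr (Sum.inr c))).natAbs
        ∈ Set.range (dtsLabel n) := by
  have hc : (c:ℕ) < n := c.2
  have ha : (a:ℕ) ≤ n := by omega
  simp only [dtsAdj, dtsRel, dtsLabel, or_false]
  obtain h | h | h | h : (a:ℕ) = c ∨ (a:ℕ) = (c:ℕ) + 1 ∨ (a:ℕ) < c ∨ (c:ℕ) + 2 ≤ a := by omega
  · obtain ⟨j, hj⟩ : ∃ j, (c:ℕ) + j + 1 = n := ⟨n - 1 - (c:ℕ), by omega⟩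
    rw [h, show n - (c:ℕ) = j + 1 from by omega, show n - 1 - (c:ℕ) = j from by omega]
    exact dts_decide n hn (i := (c:ℕ)) (j := j) (r := 1)
      (Or.inr (by ring)) (by norm_num) (by norm_num) (by omega)
  · obtain ⟨j, hj⟩ : ∃ j, (c:ℕ) + j + 1 = n := ⟨n - 1 - (c:ℕ), by omega⟩
    rw [h, show n - ((c:ℕ) + 1) = j from by omega, show n - 1 - (c:ℕ) = j from by omega]
    exact dts_decide n hn (i := (c:ℕ)) (j := j+1) (r := 1)
      (Or.inr (by ring)) (by norm_num) (by norm_num) (by omega)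
  · obtain ⟨d, hd1, hd2⟩ : ∃ d, 1 ≤ d ∧ (c:ℕ) = (a:ℕ) + d := ⟨(c:ℕ) - (a:ℕ), by omega, by omega⟩
    obtain ⟨j, hj⟩ : ∃ j, (a:ℕ) + d + j + 1 = n := ⟨n - 1 - (c:ℕ), by omega⟩
    rw [hd2, show n - (a:ℕ) = j + (d+1) from by omega,
      show n - 1 - ((a:ℕ) + d) = j from by omega]
    obtain rfl | rfl | h3 : d = 1 ∨ d = 2 ∨ 3 ≤ d := by omega
    · exact dts_decide n hn (i := (a:ℕ)) (j := j) (r := 1)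
        (Or.inr (by ring)) (by norm_num) (by norm_num) (by omega)
    · exact dts_decide n hn (i := (a:ℕ)) (j := j) (r := 1)
        (Or.inl (by ring)) (by norm_num) (by norm_num) (by omega)
    · have hbd := dts_master 2 1 11 3 (by norm_num) d h3
      have f1 := dts_m32 d
      have f3 := dts_m33 d (by omega)
      have f4 := dts_m23 d
      exact dts_decide n hn (i := (a:ℕ)) (j := j) (r := 3^d - 2*2^d)
        (Or.inl (by zify [show 2*2^d ≤ 3^d from by omega]; ring))
        (by omega) (by omega) (by omega)
  · obtain ⟨e, he⟩ : ∃ e, (a:ℕ) = (c:ℕ) + e + 2 := ⟨(a:ℕ) - (c:ℕ) - 2, by omega⟩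
    obtain ⟨j, hj⟩ : ∃ j, (c:ℕ) + e + 2 + j = n := ⟨n - (a:ℕ), by omega⟩
    rw [he, show n - ((c:ℕ) + e + 2) = j from by omega,
      show n - 1 - (c:ℕ) = j + (e+1) from by omega]
    have hbd := dts_master 2 9 7 0 (by norm_num) e (Nat.zero_le e)
    have f1 := dts_m32 e
    have f4 := dts_m23 e
    exact dts_decide n hn (i := (c:ℕ)) (j := j) (r := 9*3^e - 2*2^e)
      (Or.inr (by zify [show 2*2^e ≤ 9*3^e from by omega]; ring))
      (by omega) (by omega) (by omega)

lemma dts_vv (n : ℕ) (hn : 1 ≤ n) (b b' : Fin n) (h : (b:ℕ) < (b':ℕ)) :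
    dtsAdj n (Sum.inr (Sum.inl b)) (Sum.inr (Sum.inl b')) ↔
      ((dtsLabel n (Sum.inr (Sum.inl b)) : ℤ) - dtsLabel n (Sum.inr (Sum.inl b'))).natAbs
        ∈ Set.range (dtsLabel n) := by
  have hB' : (b':ℕ) < n := b'.2
  obtain ⟨d, hd1, hd2⟩ : ∃ d, 1 ≤ d ∧ (b':ℕ) = (b:ℕ) + d := ⟨(b':ℕ) - (b:ℕ), by omega, by omega⟩
  obtain ⟨j, hj⟩ : ∃ j, (b:ℕ) + d + j + 1 = n := ⟨n - 1 - (b':ℕ), by omega⟩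
  simp only [dtsAdj, dtsRel, dtsLabel, or_false]
  rw [hd2, show n - 1 - (b:ℕ) = j + d from by omega,
    show n - 1 - ((b:ℕ) + d) = j from by omega]
  obtain rfl | rfl | h3 : d = 1 ∨ d = 2 ∨ 3 ≤ d := by omega
  · exact dts_decide n hn (i := (b:ℕ)) (j := j) (r := 5)
      (Or.inl (by ring)) (by norm_num) (by norm_num) (iff_of_false id (by omega))
  · exact dts_decide n hn (i := (b:ℕ)) (j := j) (r := 25)
      (Or.inl (by ring)) (by norm_num) (by norm_num) (iff_of_false id (by omega))
  · have hb := dts_master 1 1 19 3 (by norm_num) d h3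
    have f1 := dts_m32 d
    have f2 := dts_m22 d (by omega)
    have f3 := dts_m33 d (by omega)
    have f4 := dts_m23 d
    exact dts_decide n hn (i := (b:ℕ)) (j := j) (r := 5*3^d - 5*2^d)
      (Or.inl (by zify [show 5*2^d ≤ 5*3^d from by omega]; ring))
      (by omega) (by omega) (iff_of_false id (by omega))

lemma dts_ww (n : ℕ) (hn : 1 ≤ n) (c c' : Fin n) (h : (c:ℕ) < (c':ℕ)) :
    dtsAdj n (Sum.inr (Sum.inr c)) (Sum.inr (Sum.inr c')) ↔
      ((dtsLabel n (Sum.inr (Sum.inr c)) : ℤ) - dtsLabel n (Sum.inr (Sum.inr c'))).natAbs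
        ∈ Set.range (dtsLabel n) := by
  have hC' : (c':ℕ) < n := c'.2
  obtain ⟨d, hd1, hd2⟩ : ∃ d, 1 ≤ d ∧ (c':ℕ) = (c:ℕ) + d := ⟨(c':ℕ) - (c:ℕ), by omega, by omega⟩
  obtain ⟨j, hj⟩ : ∃ j, (c:ℕ) + d + j + 1 = n := ⟨n - 1 - (c':ℕ), by omega⟩
  simp only [dtsAdj, dtsRel, dtsLabel, or_false]
  rw [hd2, show n - 1 - (c:ℕ) = j + d from by omega,
    show n - 1 - ((c:ℕ) + d) = j from by omega]
  obtain rfl | rfl | h3 : d = 1 ∨ d = 2 ∨ 3 ≤ d := by omega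
  · exact dts_decide n hn (i := (c:ℕ)) (j := j) (r := 1)
      (Or.inl (by ring)) (by norm_num) (by norm_num) (iff_of_false id (by omega))
  · exact dts_decide n hn (i := (c:ℕ)) (j := j) (r := 5)
      (Or.inl (by ring)) (by norm_num) (by norm_num) (iff_of_false id (by omega))
  · have hb := dts_master 1 1 19 3 (by norm_num) d h3
    have f1 := dts_m32 d
    have f2 := dts_m22 d (by omega)
    have f3 := dts_m33 d (by omega)
    have f4 := dts_m23 d
    exact dts_decide n hn (i := (c:ℕ)) (j := j) (r := 3^d - 2^d)
      (Or.inl (by zify [show 2^d ≤ 3^d from by omega]; ring))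
      (by omega) (by omega) (iff_of_false id (by omega))

lemma dts_vw (n : ℕ) (hn : 1 ≤ n) (b c : Fin n) :
    dtsAdj n (Sum.inr (Sum.inl b)) (Sum.inr (Sum.inr c)) ↔
      ((dtsLabel n (Sum.inr (Sum.inl b)) : ℤ) - dtsLabel n (Sum.inr (Sum.inr c))).natAbs
        ∈ Set.range (dtsLabel n) := by
  have hb : (b:ℕ) < n := b.2
  have hc : (c:ℕ) < n := c.2
  simp only [dtsAdj, dtsRel, dtsLabel, or_false]
  obtain h | h | h : (b:ℕ) = c ∨ (b:ℕ) < c ∨ (c:ℕ) < b := by omega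
  · obtain ⟨j, hj⟩ : ∃ j, (b:ℕ) + j + 1 = n := ⟨n - 1 - (b:ℕ), by omega⟩
    rw [← h, show n - 1 - (b:ℕ) = j from by omega]
    exact dts_decide n hn (i := (b:ℕ)) (j := j+2) (r := 1)
      (Or.inr (by ring)) (by norm_num) (by norm_num) (iff_of_false id (by omega))
  · obtain ⟨d, hd1, hd2⟩ : ∃ d, 1 ≤ d ∧ (c:ℕ) = (b:ℕ) + d := ⟨(c:ℕ) - (b:ℕ), by omega, by omega⟩
    obtain ⟨j, hj⟩ : ∃ j, (b:ℕ) + d + j + 1 = n := ⟨n - 1 - (c:ℕ), by omega⟩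
    rw [hd2, show n - 1 - (b:ℕ) = j + d from by omega,
      show n - 1 - ((b:ℕ) + d) = j from by omega]
    obtain rfl | rfl | rfl | rfl | h5 : d = 1 ∨ d = 2 ∨ d = 3 ∨ d = 4 ∨ 5 ≤ d := by omega
    · exact dts_decide n hn (i := (b:ℕ)) (j := j) (r := 7)
        (Or.inr (by ring)) (by norm_num) (by norm_num) (iff_of_false id (by omega))
    · exact dts_decide n hn (i := (b:ℕ)) (j := j) (r := 11)
        (Or.inr (by ring)) (by norm_num) (by norm_num) (iff_of_false id (by omega))
    · exact dts_decide n hn (i := (b:ℕ)) (j := j) (r := 13)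
        (Or.inr (by ring)) (by norm_num) (by norm_num) (iff_of_false id (by omega))
    · exact dts_decide n hn (i := (b:ℕ)) (j := j) (r := 1)
        (Or.inl (by ring)) (by norm_num) (by norm_num) (iff_of_false id (by omega))
    · have hbd := dts_master 5 1 83 5 (by norm_num) d h5
      have f1 := dts_m32 d
      have f2 := dts_m22 d (by omega)
      have f3 := dts_m33 d (by omega)
      have f4 := dts_m23 d
      exact dts_decide n hn (i := (b:ℕ)) (j := j) (r := 3^d - 5*2^d)
        (Or.inl (by zify [show 5*2^d ≤ 3^d from by omega]; ring))
        (by omega) (by omega) (iff_of_false id (by omega))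
  · obtain ⟨d, hd1, hd2⟩ : ∃ d, 1 ≤ d ∧ (b:ℕ) = (c:ℕ) + d := ⟨(b:ℕ) - (c:ℕ), by omega, by omega⟩
    obtain ⟨j, hj⟩ : ∃ j, (c:ℕ) + d + j + 1 = n := ⟨n - 1 - (b:ℕ), by omega⟩
    rw [hd2, show n - 1 - ((c:ℕ) + d) = j from by omega,
      show n - 1 - (c:ℕ) = j + d from by omega]
    have hbd := dts_master 1 5 13 1 (by norm_num) d hd1
    have f1 := dts_m32 d
    have f2 := dts_m22 d hd1
    have f3 := dts_m33 d hd1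
    have f4 := dts_m23 d
    exact dts_decide n hn (i := (c:ℕ)) (j := j) (r := 5*3^d - 2^d)
      (Or.inr (by zify [show 2^d ≤ 5*3^d from by omega]; ring))
      (by omega) (by omega) (iff_of_false id (by omega))

/-- The double triangular snake `DTₙ` is a difference graph via the labeling
above: it is injective and realises exactly the edges of `DTₙ`. -/
theorem stmt_10 (n : ℕ) (hn : 1 ≤ n) :
    Function.Injective (dtsLabel n) ∧
    ∀ x y, x ≠ y →
      (dtsAdj n x y ↔
        ((dtsLabel n x : ℤ) - (dtsLabel n y : ℤ)).natAbs ∈ Set.range (dtsLabel n)) := by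
  constructor
  · intro x y hxy
    rcases x with a | b | c <;> rcases y with a' | b' | c' <;>
      simp only [dtsLabel] at hxy
    · have h' : 3^(a:ℕ) * 2^(n - (a:ℕ)) * 1 = 3^(a':ℕ) * 2^(n - (a':ℕ)) * 1 := by
        rw [mul_one, mul_one]; exact hxy
      obtain ⟨e1, _, _⟩ := dts_unique23 (by norm_num) (by norm_num) (by norm_num) (by norm_num) h'
      exact congrArg Sum.inl (Fin.ext e1)
    · have h' : 3^(a:ℕ) * 2^(n - (a:ℕ)) * 1 = 3^(b':ℕ) * 2^(n - 1 - (b':ℕ)) * 5 := by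
        rw [mul_one, hxy]; ring
      obtain ⟨_, _, e3⟩ := dts_unique23 (by norm_num) (by norm_num) (by norm_num) (by norm_num) h'
      exact absurd e3 (by norm_num)
    · have h' : 3^(a:ℕ) * 2^(n - (a:ℕ)) * 1 = 3^(c':ℕ) * 2^(n - 1 - (c':ℕ)) * 1 := by
        rw [mul_one, mul_one]; exact hxy
      obtain ⟨e1, e2, _⟩ := dts_unique23 (by norm_num) (by norm_num) (by norm_num) (by norm_num) h'
      exfalso
      have h1 : (a:ℕ) ≤ n := by omega
      have h2 : (c':ℕ) < n := c'.2
      omega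
    · have h' : 3^(b:ℕ) * 2^(n - 1 - (b:ℕ)) * 5 = 3^(a':ℕ) * 2^(n - (a':ℕ)) * 1 := by
        rw [mul_one, ← hxy]; ring
      obtain ⟨_, _, e3⟩ := dts_unique23 (by norm_num) (by norm_num) (by norm_num) (by norm_num) h'
      exact absurd e3 (by norm_num)
    · have h' : 3^(b:ℕ) * 2^(n - 1 - (b:ℕ)) * 5 = 3^(b':ℕ) * 2^(n - 1 - (b':ℕ)) * 5 := by
        rw [show 3^(b:ℕ) * 2^(n - 1 - (b:ℕ)) * 5 = 5 * 3^(b:ℕ) * 2^(n - 1 - (b:ℕ)) from by ring,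
          hxy]; ring
      obtain ⟨e1, _, _⟩ := dts_unique23 (by norm_num) (by norm_num) (by norm_num) (by norm_num) h'
      exact congrArg (Sum.inr ∘ Sum.inl) (Fin.ext e1)
    · have h' : 3^(b:ℕ) * 2^(n - 1 - (b:ℕ)) * 5 = 3^(c':ℕ) * 2^(n - 1 - (c':ℕ)) * 1 := by
        rw [mul_one, ← hxy]; ring
      obtain ⟨_, _, e3⟩ := dts_unique23 (by norm_num) (by norm_num) (by norm_num) (by norm_num) h'
      exact absurd e3 (by norm_num)
    · have h' : 3^(c:ℕ) * 2^(n - 1 - (c:ℕ)) * 1 = 3^(a':ℕ) * 2^(n - (a':ℕ)) * 1 := by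
        rw [mul_one, mul_one]; exact hxy
      obtain ⟨e1, e2, _⟩ := dts_unique23 (by norm_num) (by norm_num) (by norm_num) (by norm_num) h'
      exfalso
      have h1 : (a':ℕ) ≤ n := by omega
      have h2 : (c:ℕ) < n := c.2
      omega
    · have h' : 3^(c:ℕ) * 2^(n - 1 - (c:ℕ)) * 1 = 3^(b':ℕ) * 2^(n - 1 - (b':ℕ)) * 5 := by
        rw [mul_one, hxy]; ring
      obtain ⟨_, _, e3⟩ := dts_unique23 (by norm_num) (by norm_num) (by norm_num) (by norm_num) h'
      exact absurd e3 (by norm_num)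
    · have h' : 3^(c:ℕ) * 2^(n - 1 - (c:ℕ)) * 1 = 3^(c':ℕ) * 2^(n - 1 - (c':ℕ)) * 1 := by
        rw [mul_one, mul_one]; exact hxy
      obtain ⟨e1, _, _⟩ := dts_unique23 (by norm_num) (by norm_num) (by norm_num) (by norm_num) h'
      exact congrArg (Sum.inr ∘ Sum.inr) (Fin.ext e1)
  · have symmcase : ∀ x y,
        (dtsAdj n x y ↔
          ((dtsLabel n x : ℤ) - dtsLabel n y).natAbs ∈ Set.range (dtsLabel n)) →
        (dtsAdj n y x ↔
          ((dtsLabel n y : ℤ) - dtsLabel n x).natAbs ∈ Set.range (dtsLabel n)) := by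
      intro x y hxy
      rw [show ((dtsLabel n y : ℤ) - dtsLabel n x).natAbs
        = ((dtsLabel n x : ℤ) - dtsLabel n y).natAbs from by omega]
      exact ⟨fun h => hxy.mp h.symm, fun h => (hxy.mpr h).symm⟩
    intro x y hne
    rcases x with a | b | c <;> rcases y with a' | b' | c'
    · have hv : (a:ℕ) ≠ (a':ℕ) := fun hc => hne (congrArg Sum.inl (Fin.ext hc))
      rcases lt_or_gt_of_ne hv with h | h
      · exact dts_uu n hn a a' h
      · exact symmcase _ _ (dts_uu n hn a' a h)
    · exact dts_uv n hn a b'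
    · exact dts_uw n hn a c'
    · exact symmcase _ _ (dts_uv n hn a' b)
    · have hv : (b:ℕ) ≠ (b':ℕ) := fun hc =>
        hne (congrArg (Sum.inr ∘ Sum.inl) (Fin.ext hc))
      rcases lt_or_gt_of_ne hv with h | h
      · exact dts_vv n hn b b' h
      · exact symmcase _ _ (dts_vv n hn b' b h)
    · exact dts_vw n hn b c'
    · exact symmcase _ _ (dts_uw n hn a' c)
    · exact symmcase _ _ (dts_vw n hn b' c)
    · have hv : (c:ℕ) ≠ (c':ℕ) := fun hc =>
        hne (congrArg (Sum.inr ∘ Sum.inr) (Fin.ext hc))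
      rcases lt_or_gt_of_ne hv with h | h
      · exact dts_ww n hn c c' h
      · exact symmcase _ _ (dts_ww n hn c' c h)
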